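/- arXiv:2102.00185 — 2 statements merged into one kernel-verified Lean document; each statement's English description precedes it below -/
import Mathlib

section
/- Let P be a Markov kernel on a measurable space Z satisfying the super-Lyapunov drift condition: there are constants c > 0, b ≥ 1, δ ∈ (1/2, 1], R₀ ≥ 0 and a measurable function V : Z → [e, ∞) such that, setting W = log V, for every z ∈ Z one has PV(z) ≤ exp(−c W(z)^δ) V(z) if W(z) > R₀, and PV(z) ≤ b if W(z) ≤ R₀. Let λ ∈ [0,1) be such that exp(−c W(z)^δ) ≤ λ whenever W(z) > R₀. Let π be a probability measure on Z invariant for P (i.e., ∫ P(z, B) π(dz) = π(B) for all measurable B) with ∫ V dπ < ∞. Then: (i) ∫ V dπ ≤ b/(1−λ); and (ii) for every γ with 0 < γ ≤ δ, ∫ W^γ dπ ≤ b_γ/c_γ, where c_γ = min(1, (γ+1−δ)c) and b_γ = (log b)^{γ+1−δ}. -/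
open MeasureTheory ProbabilityTheory
open scoped ENNReal

/-!
Integrating a drift inequality `g + P f ≤ f + C` against an invariant probability measure `π`
gives `∫ g dπ ≤ C` as soon as `∫ f dπ < ∞`. For the first bound take `f = V`, `g = (1 - λ) V`,
`C = b`. For the second take `f = W ^ β` with `β = γ + 1 - δ`: Jensen's inequality, for `log`
and then for `x ↦ x ^ β`, turns the drift of `V` into `P W ^ β ≤ (W - c W ^ δ) ^ β` where
`W > R₀` and `P W ^ β ≤ (log b) ^ β` elsewhere, and the tangent line of `x ↦ x ^ β` at `W`
bounds `(W - c W ^ δ) ^ β` by `W ^ β - β c W ^ γ`; so `g = min 1 (β c) W ^ γ`, `C = (log b) ^ β`.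
-/

theorem Real.rpow_le_max_one {x β : ℝ} (hx : 0 ≤ x) (hβ0 : 0 ≤ β) (hβ1 : β ≤ 1) :
    x ^ β ≤ max 1 x := by
  rcases le_total x 1 with h | h
  · exact le_max_of_le_left (Real.rpow_le_one hx h hβ0)
  · exact le_max_of_le_right ((Real.rpow_le_rpow_of_exponent_le h hβ1).trans_eq (Real.rpow_one x))

theorem Real.rpow_sub_le_rpow_sub_mul {a h β : ℝ} (ha : 0 < a) (hha : h ≤ a)
    (hβ0 : 0 ≤ β) (hβ1 : β ≤ 1) :
    (a - h) ^ β ≤ a ^ β - β * a ^ (β - 1) * h := by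
  have hha' : h / a ≤ 1 := div_le_one_of_le₀ hha ha.le
  have hsplit : a - h = a * (1 + -(h / a)) := by field_simp; ring
  calc (a - h) ^ β = a ^ β * (1 + -(h / a)) ^ β := by
        rw [hsplit, Real.mul_rpow ha.le (by linarith)]
    _ ≤ a ^ β * (1 + β * -(h / a)) :=
        mul_le_mul_of_nonneg_left (rpow_one_add_le_one_add_mul_self (by linarith) hβ0 hβ1)
          (Real.rpow_nonneg ha.le β)
    _ = a ^ β - β * a ^ (β - 1) * h := by
        rw [Real.rpow_sub_one ha.ne']; field_simp; ring

theorem Real.rpow_sub_mul_rpow_le {w c δ γ : ℝ} (hw : 0 < w) (hle : c * w ^ δ ≤ w)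
    (hγδ0 : 0 ≤ γ + 1 - δ) (hγδ1 : γ + 1 - δ ≤ 1) :
    (w - c * w ^ δ) ^ (γ + 1 - δ) ≤ w ^ (γ + 1 - δ) - (γ + 1 - δ) * c * w ^ γ := by
  have hpow : w ^ (γ + 1 - δ - 1) * w ^ δ = w ^ γ := by
    rw [← Real.rpow_add hw]; ring_nf
  calc (w - c * w ^ δ) ^ (γ + 1 - δ)
      ≤ w ^ (γ + 1 - δ) - (γ + 1 - δ) * w ^ (γ + 1 - δ - 1) * (c * w ^ δ) :=
        Real.rpow_sub_le_rpow_sub_mul hw hle hγδ0 hγδ1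
    _ = w ^ (γ + 1 - δ) - (γ + 1 - δ) * c * w ^ γ := by rw [← hpow]; ring

section

variable {α : Type*} [MeasurableSpace α] {μ : Measure α} {f : α → ℝ}

theorem MeasureTheory.Integrable.rpow_of_le_one [IsFiniteMeasure μ] (hfi : Integrable f μ)
    (hf0 : ∀ᵐ x ∂μ, 0 ≤ f x) {β : ℝ} (hβ0 : 0 ≤ β) (hβ1 : β ≤ 1) :
    Integrable (fun x => f x ^ β) μ := by
  refine ((integrable_const 1).sup hfi).mono' (hfi.aemeasurable.pow_const β).aestronglyMeasurable ?_
  filter_upwards [hf0] with x hx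
  rw [Real.norm_of_nonneg (Real.rpow_nonneg hx β)]
  exact Real.rpow_le_max_one hx hβ0 hβ1

variable [IsProbabilityMeasure μ]

theorem integral_log_le_log_integral (hfi : Integrable f μ) (hf1 : ∀ᵐ x ∂μ, 1 ≤ f x) :
    ∫ x, Real.log (f x) ∂μ ≤ Real.log (∫ x, f x ∂μ) := by
  have hlogi : Integrable (fun x => Real.log (f x)) μ := by
    refine hfi.mono'
      (Real.measurable_log.comp_aemeasurable hfi.aemeasurable).aestronglyMeasurable ?_
    filter_upwards [hf1] with x hx
    rw [Real.norm_of_nonneg (Real.log_nonneg hx)]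
    exact Real.log_le_self (by linarith)
  have hpos : Set.Ici (1 : ℝ) ⊆ Set.Ioi 0 := fun x (hx : 1 ≤ x) => zero_lt_one.trans_le hx
  exact (strictConcaveOn_log_Ioi.concaveOn.subset hpos (convex_Ici 1)).le_map_integral
    (Real.continuousOn_log.mono fun x hx => (hpos hx).ne') isClosed_Ici hf1 hfi hlogi

theorem integral_rpow_le_rpow_integral (hfi : Integrable f μ) (hf0 : ∀ᵐ x ∂μ, 0 ≤ f x)
    {β : ℝ} (hβ0 : 0 ≤ β) (hβ1 : β ≤ 1) :
    ∫ x, f x ^ β ∂μ ≤ (∫ x, f x ∂μ) ^ β :=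
  (Real.concaveOn_rpow hβ0 hβ1).le_map_integral
    (fun x _ => (Real.continuousAt_rpow_const x β (Or.inr hβ0)).continuousWithinAt) isClosed_Ici
    hf0 hfi (hfi.rpow_of_le_one hf0 hβ0 hβ1)

theorem one_le_of_lintegral_ofReal_le (hf1 : ∀ x, 1 ≤ f x) {B : ℝ}
    (hB : ∫⁻ x, ENNReal.ofReal (f x) ∂μ ≤ ENNReal.ofReal B) : 1 ≤ B := by
  have h : ENNReal.ofReal 1 ≤ ENNReal.ofReal B :=
    calc ENNReal.ofReal 1 = ∫⁻ _, ENNReal.ofReal 1 ∂μ := by simp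
      _ ≤ ∫⁻ x, ENNReal.ofReal (f x) ∂μ := lintegral_mono fun x => ENNReal.ofReal_le_ofReal (hf1 x)
      _ ≤ ENNReal.ofReal B := hB
  exact (ENNReal.ofReal_le_ofReal_iff'.mp h).resolve_right (by norm_num)

theorem lintegral_ofReal_log_rpow_le (hf : Measurable f)
    (hf1 : ∀ x, 1 ≤ f x) {s β : ℝ} (hβ0 : 0 ≤ β) (hβ1 : β ≤ 1)
    (hs : ∫⁻ x, ENNReal.ofReal (f x) ∂μ ≤ ENNReal.ofReal (Real.exp s)) :
    ∫⁻ x, ENNReal.ofReal (Real.log (f x) ^ β) ∂μ ≤ ENNReal.ofReal (s ^ β) := by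
  have hf0 : ∀ x, 0 ≤ f x := fun x => zero_le_one.trans (hf1 x)
  have hfi : Integrable f μ := ⟨hf.aestronglyMeasurable,
    (hasFiniteIntegral_iff_ofReal (.of_forall hf0)).mpr (hs.trans_lt ENNReal.ofReal_lt_top)⟩
  have hlog0 : ∀ x, 0 ≤ Real.log (f x) := fun x => Real.log_nonneg (hf1 x)
  have hlogi : Integrable (fun x => Real.log (f x)) μ := by
    refine hfi.mono' hf.log.aestronglyMeasurable (.of_forall fun x => ?_)
    rw [Real.norm_of_nonneg (hlog0 x)]
    exact Real.log_le_self (hf0 x)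
  have hint_le : ∫ x, f x ∂μ ≤ Real.exp s := by
    rw [integral_eq_lintegral_of_nonneg_ae (.of_forall hf0) hf.aestronglyMeasurable]
    exact ENNReal.toReal_le_of_le_ofReal (Real.exp_pos s).le hs
  have hint_pos : 0 < ∫ x, f x ∂μ :=
    zero_lt_one.trans_le (by simpa using integral_mono (integrable_const 1) hfi hf1)
  have hlog_le : ∫ x, Real.log (f x) ∂μ ≤ s :=
    calc ∫ x, Real.log (f x) ∂μ ≤ Real.log (∫ x, f x ∂μ) :=
          integral_log_le_log_integral hfi (.of_forall hf1)
      _ ≤ s := (Real.log_le_log hint_pos hint_le).trans_eq (Real.log_exp s)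
  rw [← ofReal_integral_eq_lintegral_ofReal (hlogi.rpow_of_le_one (.of_forall hlog0) hβ0 hβ1)
    (.of_forall fun x => Real.rpow_nonneg (hlog0 x) β)]
  exact ENNReal.ofReal_le_ofReal
    ((integral_rpow_le_rpow_integral hlogi (.of_forall hlog0) hβ0 hβ1).trans
      (Real.rpow_le_rpow (integral_nonneg hlog0) hlog_le hβ0))

theorem lintegral_ofReal_log_rpow_drift (hf : Measurable f) (hf1 : ∀ x, 1 ≤ f x)
    {v b c δ γ : ℝ} (hv : Real.exp 1 ≤ v) (hb : 1 ≤ b) (hc : 0 ≤ c) (hγ : 0 < γ) (hγδ : γ ≤ δ)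
    (hδ : δ ≤ 1)
    (hdrift : ∫⁻ x, ENNReal.ofReal (f x) ∂μ ≤ ENNReal.ofReal (Real.exp (-c * Real.log v ^ δ) * v) ∨
      ∫⁻ x, ENNReal.ofReal (f x) ∂μ ≤ ENNReal.ofReal b) :
    ENNReal.ofReal (min 1 ((γ + 1 - δ) * c) * Real.log v ^ γ) +
        ∫⁻ x, ENNReal.ofReal (Real.log (f x) ^ (γ + 1 - δ)) ∂μ ≤
      ENNReal.ofReal (Real.log v ^ (γ + 1 - δ)) + ENNReal.ofReal (Real.log b ^ (γ + 1 - δ)) := by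
  set w := Real.log v
  set β := γ + 1 - δ
  have hβ0 : 0 ≤ β := by linarith
  have hβ1 : β ≤ 1 := by linarith
  have hv0 : 0 < v := (Real.exp_pos 1).trans_le hv
  have hw1 : 1 ≤ w := (Real.le_log_iff_exp_le hv0).mpr hv
  have hw0 : 0 < w := zero_lt_one.trans_le hw1
  have hmw : 0 ≤ min 1 (β * c) * w ^ γ := by positivity
  rcases hdrift with hbig | hsmall
  · have hexp : Real.exp (-c * w ^ δ) * v = Real.exp (w - c * w ^ δ) := by
      rw [sub_eq_neg_add, Real.exp_add, Real.exp_log hv0, neg_mul]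
    rw [hexp] at hbig
    have hs0 : c * w ^ δ ≤ w := by
      have := Real.one_le_exp_iff.mp (one_le_of_lintegral_ofReal_le hf1 hbig)
      linarith
    have hstep := Real.rpow_sub_mul_rpow_le hw0 hs0 hβ0 hβ1
    have hm : min 1 (β * c) * w ^ γ ≤ β * c * w ^ γ :=
      mul_le_mul_of_nonneg_right (min_le_right _ _) (Real.rpow_nonneg hw0.le γ)
    calc ENNReal.ofReal (min 1 (β * c) * w ^ γ) + ∫⁻ x, ENNReal.ofReal (Real.log (f x) ^ β) ∂μ
        ≤ ENNReal.ofReal (min 1 (β * c) * w ^ γ) + ENNReal.ofReal (w ^ β - β * c * w ^ γ) :=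
          add_le_add le_rfl ((lintegral_ofReal_log_rpow_le hf hf1 hβ0 hβ1 hbig).trans
            (ENNReal.ofReal_le_ofReal hstep))
      _ ≤ ENNReal.ofReal (w ^ β) := by
          rw [← ENNReal.ofReal_add hmw ((Real.rpow_nonneg (by linarith) β).trans hstep)]
          exact ENNReal.ofReal_le_ofReal (by linarith)
      _ ≤ _ := le_self_add
  · rw [← Real.exp_log (zero_lt_one.trans_le hb)] at hsmall
    have hm : min 1 (β * c) * w ^ γ ≤ w ^ β :=
      calc min 1 (β * c) * w ^ γ ≤ 1 * w ^ γ :=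
            mul_le_mul_of_nonneg_right (min_le_left _ _) (Real.rpow_nonneg hw0.le γ)
        _ ≤ w ^ β := by
            rw [one_mul]; exact Real.rpow_le_rpow_of_exponent_le hw1 (by linarith)
    exact add_le_add (ENNReal.ofReal_le_ofReal hm)
      (lintegral_ofReal_log_rpow_le hf hf1 hβ0 hβ1 hsmall)

end

section

variable {Z : Type*} [MeasurableSpace Z] {κ : Kernel Z Z} {π : Measure Z}

theorem ProbabilityTheory.Kernel.Invariant.lintegral_lintegral (hπ : κ.Invariant π)
    {f : Z → ℝ≥0∞} (hf : Measurable f) :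
    ∫⁻ z, ∫⁻ y, f y ∂κ z ∂π = ∫⁻ z, f z ∂π := by
  conv_rhs => rw [← hπ.def]
  rw [Measure.lintegral_bind κ.measurable.aemeasurable hf.aemeasurable]

theorem ProbabilityTheory.Kernel.Invariant.lintegral_le_of_drift [IsProbabilityMeasure π]
    (hπ : κ.Invariant π) {f g : Z → ℝ≥0∞} (hf : Measurable f) (hfπ : ∫⁻ z, f z ∂π ≠ ∞)
    {C : ℝ≥0∞} (hdrift : ∀ z, g z + ∫⁻ y, f y ∂κ z ≤ f z + C) :
    ∫⁻ z, g z ∂π ≤ C := by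
  have h : ∫⁻ z, f z ∂π + ∫⁻ z, g z ∂π ≤ ∫⁻ z, f z ∂π + C :=
    calc ∫⁻ z, f z ∂π + ∫⁻ z, g z ∂π
        = ∫⁻ z, g z ∂π + ∫⁻ z, ∫⁻ y, f y ∂κ z ∂π := by rw [hπ.lintegral_lintegral hf, add_comm]
      _ ≤ ∫⁻ z, (g z + ∫⁻ y, f y ∂κ z) ∂π := le_lintegral_add _ _
      _ ≤ ∫⁻ z, (f z + C) ∂π := lintegral_mono hdrift
      _ = ∫⁻ z, f z ∂π + C := by
        rw [lintegral_add_right _ measurable_const, MeasureTheory.lintegral_const, measure_univ,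
          mul_one]
  exact (ENNReal.add_le_add_iff_left hfπ).mp h

theorem ProbabilityTheory.Kernel.Invariant.lintegral_ofReal_le_div_of_drift
    [IsProbabilityMeasure π] (hπ : κ.Invariant π) {f : Z → ℝ≥0∞} (hf : Measurable f)
    (hfπ : ∫⁻ z, f z ∂π ≠ ∞) {g : Z → ℝ} {m B : ℝ} (hm : 0 < m)
    (hdrift : ∀ z, ENNReal.ofReal (m * g z) + ∫⁻ y, f y ∂κ z ≤ f z + ENNReal.ofReal B) :
    ∫⁻ z, ENNReal.ofReal (g z) ∂π ≤ ENNReal.ofReal (B / m) := by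
  have h := hπ.lintegral_le_of_drift hf hfπ hdrift
  simp_rw [ENNReal.ofReal_mul hm.le] at h
  rw [lintegral_const_mul' _ _ ENNReal.ofReal_ne_top] at h
  rw [ENNReal.ofReal_div_of_pos hm, ENNReal.le_div_iff_mul_le
    (.inl (ENNReal.ofReal_pos.mpr hm).ne') (.inl ENNReal.ofReal_ne_top), mul_comm]
  exact h

theorem ProbabilityTheory.Kernel.Invariant.lintegral_ofReal_le_of_geometric_drift
    [IsProbabilityMeasure π] (hπ : κ.Invariant π) {f : Z → ℝ} (hf : Measurable f)
    (hf0 : ∀ z, 0 ≤ f z) (hfπ : ∫⁻ z, ENNReal.ofReal (f z) ∂π ≠ ∞) {lam b : ℝ}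
    (hlam0 : 0 ≤ lam) (hlam1 : lam < 1)
    (hdrift : ∀ z, ∫⁻ y, ENNReal.ofReal (f y) ∂κ z ≤
      ENNReal.ofReal (lam * f z) + ENNReal.ofReal b) :
    ∫⁻ z, ENNReal.ofReal (f z) ∂π ≤ ENNReal.ofReal (b / (1 - lam)) := by
  refine hπ.lintegral_ofReal_le_div_of_drift hf.ennreal_ofReal hfπ (by linarith) fun z => ?_
  calc _ ≤ ENNReal.ofReal ((1 - lam) * f z) + (ENNReal.ofReal (lam * f z) + ENNReal.ofReal b) :=
        add_le_add le_rfl (hdrift z)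
    _ = _ := by
      rw [← add_assoc, ← ENNReal.ofReal_add (by nlinarith [hf0 z]) (by nlinarith [hf0 z])]
      ring_nf

end

theorem stationary_moment_bounds_general {Z : Type*} [MeasurableSpace Z]
    (P : Kernel Z Z) [IsMarkovKernel P]
    (V : Z → ℝ) (hVmeas : Measurable V) (hVe : ∀ z, Real.exp 1 ≤ V z)
    (c b δ R₀ : ℝ) (hc : 0 < c) (hb : 1 ≤ b)
    (hδ2 : δ ≤ 1)
    (W : Z → ℝ) (hW : W = fun z => Real.log (V z))
    (hdrift₁ : ∀ z, R₀ < W z →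
      ∫⁻ y, ENNReal.ofReal (V y) ∂(P z) ≤
        ENNReal.ofReal (Real.exp (-c * W z ^ δ) * V z))
    (hdrift₂ : ∀ z, W z ≤ R₀ → ∫⁻ y, ENNReal.ofReal (V y) ∂(P z) ≤ ENNReal.ofReal b)
    (lam : ℝ) (hlam0 : 0 ≤ lam) (hlam1 : lam < 1)
    (hlam : ∀ z, R₀ < W z → Real.exp (-c * W z ^ δ) ≤ lam)
    (π : Measure Z) [IsProbabilityMeasure π]
    (hπ : Kernel.Invariant P π)
    (hVint : ∫⁻ z, ENNReal.ofReal (V z) ∂π < ⊤) :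
    (∫⁻ z, ENNReal.ofReal (V z) ∂π ≤ ENNReal.ofReal (b / (1 - lam))) ∧
      (∀ γ : ℝ, 0 < γ → γ ≤ δ →
        ∫⁻ z, ENNReal.ofReal (W z ^ γ) ∂π ≤
          ENNReal.ofReal
            (Real.log b ^ (γ + 1 - δ) / min 1 ((γ + 1 - δ) * c))) := by
  subst hW
  have hV1 (z : Z) : 1 ≤ V z := (Real.one_le_exp zero_le_one).trans (hVe z)
  constructor
  · refine hπ.lintegral_ofReal_le_of_geometric_drift hVmeas (fun z => by linarith [hV1 z])
      hVint.ne hlam0 hlam1 fun z => ?_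
    by_cases h : R₀ < Real.log (V z)
    · exact le_add_right ((hdrift₁ z h).trans (ENNReal.ofReal_le_ofReal
        (mul_le_mul_of_nonneg_right (hlam z h) (by linarith [hV1 z]))))
    · exact le_add_left (hdrift₂ z (not_lt.mp h))
  · intro γ hγ hγδ
    have hWβ_le_V (z : Z) : Real.log (V z) ^ (γ + 1 - δ) ≤ V z :=
      calc Real.log (V z) ^ (γ + 1 - δ) ≤ Real.log (V z) ^ (1 : ℝ) :=
            Real.rpow_le_rpow_of_exponent_le
              (by simpa using Real.log_le_log (by positivity) (hVe z)) (by linarith)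
        _ ≤ V z := by rw [Real.rpow_one]; exact Real.log_le_self (by linarith [hV1 z])
    refine hπ.lintegral_ofReal_le_div_of_drift (hVmeas.log.pow_const _).ennreal_ofReal
      ((lintegral_mono fun z => ENNReal.ofReal_le_ofReal (hWβ_le_V z)).trans_lt hVint).ne
      (lt_min one_pos (mul_pos (by linarith) hc)) fun z => ?_
    refine lintegral_ofReal_log_rpow_drift hVmeas hV1 (hVe z) hb hc.le hγ hγδ hδ2 ?_
    by_cases h : R₀ < Real.log (V z)
    · exact .inl (hdrift₁ z h)
    · exact .inr (hdrift₂ z (not_lt.mp h))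

/-- Under the super-Lyapunov drift condition, if `π` is an invariant
probability measure for `P` with `∫ V dπ < ∞`, then `∫ V dπ ≤ b/(1−λ)` and, for every
`0 < γ ≤ δ`, `∫ W^γ dπ ≤ b_γ/c_γ` where `c_γ = min(1, (γ+1−δ)c)` and
`b_γ = (log b)^{γ+1−δ}`. -/
theorem stationary_moment_bounds {Z : Type*} [MeasurableSpace Z]
    (P : Kernel Z Z) [IsMarkovKernel P]
    (V : Z → ℝ) (hVmeas : Measurable V) (hVe : ∀ z, Real.exp 1 ≤ V z)
    (c b δ R₀ : ℝ) (hc : 0 < c) (hb : 1 ≤ b)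
    (hδ1 : 1 / 2 < δ) (hδ2 : δ ≤ 1) (hR₀ : 0 ≤ R₀)
    (W : Z → ℝ) (hW : W = fun z => Real.log (V z))
    (hdrift₁ : ∀ z, R₀ < W z →
      ∫⁻ y, ENNReal.ofReal (V y) ∂(P z) ≤
        ENNReal.ofReal (Real.exp (-c * W z ^ δ) * V z))
    (hdrift₂ : ∀ z, W z ≤ R₀ → ∫⁻ y, ENNReal.ofReal (V y) ∂(P z) ≤ ENNReal.ofReal b)
    (lam : ℝ) (hlam0 : 0 ≤ lam) (hlam1 : lam < 1)
    (hlam : ∀ z, R₀ < W z → Real.exp (-c * W z ^ δ) ≤ lam)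
    (π : Measure Z) [IsProbabilityMeasure π]
    (hπ : Kernel.Invariant P π)
    (hVint : ∫⁻ z, ENNReal.ofReal (V z) ∂π < ⊤) :
    (∫⁻ z, ENNReal.ofReal (V z) ∂π ≤ ENNReal.ofReal (b / (1 - lam))) ∧
      (∀ γ : ℝ, 0 < γ → γ ≤ δ →
        ∫⁻ z, ENNReal.ofReal (W z ^ γ) ∂π ≤
          ENNReal.ofReal
            (Real.log b ^ (γ + 1 - δ) / min 1 ((γ + 1 - δ) * c))) :=
  stationary_moment_bounds_general P V hVmeas hVe c b δ R₀ hc hb hδ2 W hW hdrift₁ hdrift₂ lam hlam0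
    hlam1 hlam π hπ hVint
end

section
/- Let P be a Markov kernel on a measurable space Z, V : Z → [e, ∞) measurable with W := log V, and suppose there exist λ ∈ [0,1) and b ≥ 0 such that PV(z) ≤ λ V(z) + b for all z ∈ Z. Let Ā : Z → ℝ^{d×d} be measurable with |Ā(z)_{i,j}| ≤ C_A W(z)^β for all z ∈ Z and all entries (i,j), where C_A > 0 and β > 0, and let A be any fixed d×d real matrix. Then for every real numbers q, 𝒦 with 1 ≤ q ≤ 𝒦, every j ∈ ℕ, and every z ∈ Z: ( ∫_Z ‖Ā(y) − A‖^q P^j(z, dy) )^{1/q} ≤ ( ‖A‖ + d C_A (β𝒦/e)^{β} (1 + b/(1−λ))^{1/𝒦} ) · V(z)^{1/𝒦}, where ‖·‖ is the spectral norm. -/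
/-! Bounding the spectral norm by the Frobenius norm and using `log t ≤ t / e` at
`t = V^{1/(β𝒦)}` gives the pointwise bound `‖Ā(y) - A‖ ≤ ‖A‖ + c V(y)^{1/𝒦}` with
`c = d C_A (β𝒦/e)^β`. Minkowski's inequality in `L^q(P^j(z, ·))` and the monotonicity of
`L^p` norms on a probability space (`q ≤ 𝒦`) reduce the moment to `‖A‖ + c (P^j V(z))^{1/𝒦}`,
and iterating the drift condition gives `P^j V ≤ λ^j V + b/(1 - λ) ≤ (1 + b/(1 - λ)) V`
because `V ≥ 1`. -/

open MeasureTheory ProbabilityTheory Matrix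
open scoped ENNReal

/-- The `n`-fold iterate `Pⁿ` of a Markov kernel. -/
noncomputable def iterKernel {Z : Type*} [MeasurableSpace Z] (P : Kernel Z Z) :
    ℕ → Kernel Z Z
  | 0 => Kernel.id
  | n + 1 => (iterKernel P n) ∘ₖ P

/-- The spectral norm (Euclidean operator norm) of a real square matrix. -/
noncomputable def specNorm {d : ℕ} (M : Matrix (Fin d) (Fin d) ℝ) : ℝ :=
  ‖(Matrix.toEuclideanCLM (𝕜 := ℝ) M :
      EuclideanSpace ℝ (Fin d) →L[ℝ] EuclideanSpace ℝ (Fin d))‖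

lemma specNorm_nonneg {d : ℕ} (M : Matrix (Fin d) (Fin d) ℝ) : 0 ≤ specNorm M :=
  norm_nonneg _

lemma specNorm_sub_le {d : ℕ} (M N : Matrix (Fin d) (Fin d) ℝ) :
    specNorm (M - N) ≤ specNorm M + specNorm N := by
  unfold specNorm
  rw [map_sub]
  exact norm_sub_le _ _

lemma specNorm_le_sqrt_sum_sq {d : ℕ} (M : Matrix (Fin d) (Fin d) ℝ) :
    specNorm M ≤ √(∑ i, ∑ j, M i j ^ 2) := by
  refine ContinuousLinearMap.opNorm_le_bound _ (Real.sqrt_nonneg _) fun x => ?_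
  rw [EuclideanSpace.norm_eq, EuclideanSpace.norm_eq, ← Real.sqrt_mul (by positivity),
    Finset.sum_mul]
  refine Real.sqrt_le_sqrt (Finset.sum_le_sum fun i _ => ?_)
  simpa [ofLp_toEuclideanCLM, mulVec, dotProduct] using
    Finset.sum_mul_sq_le_sq_mul_sq Finset.univ (M i) x.ofLp

lemma specNorm_le_of_abs_le {d : ℕ} {M : Matrix (Fin d) (Fin d) ℝ} {C : ℝ} (hC : 0 ≤ C)
    (h : ∀ i j, |M i j| ≤ C) : specNorm M ≤ d * C := by
  refine (specNorm_le_sqrt_sum_sq M).trans (Real.sqrt_le_iff.2 ⟨by positivity, ?_⟩)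
  calc ∑ i, ∑ j, M i j ^ 2 ≤ ∑ _i : Fin d, ∑ _j : Fin d, C ^ 2 :=
        Finset.sum_le_sum fun i _ => Finset.sum_le_sum fun j _ =>
          sq_le_sq' (abs_le.1 (h i j)).1 (abs_le.1 (h i j)).2
    _ = (d * C) ^ 2 := by
      simp only [Finset.sum_const, Finset.card_univ, Fintype.card_fin, nsmul_eq_mul]
      ring

lemma Real.log_le_div_exp_one {t : ℝ} (ht : 0 < t) : Real.log t ≤ t / Real.exp 1 := by
  have h := Real.log_le_sub_one_of_pos (div_pos ht (Real.exp_pos 1))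
  rw [Real.log_div ht.ne' (Real.exp_ne_zero 1), Real.log_exp] at h
  linarith

lemma Real.log_rpow_le_mul_rpow_one_div {v β κ : ℝ} (hv : 1 ≤ v) (hβ : 0 < β) (hκ : 0 < κ) :
    Real.log v ^ β ≤ (β * κ / Real.exp 1) ^ β * v ^ (1 / κ) := by
  have hv0 : 0 < v := one_pos.trans_le hv
  set t := v ^ (1 / (β * κ))
  have hlog : Real.log v ≤ β * κ / Real.exp 1 * t := calc
    Real.log v = β * κ * Real.log t := by
      rw [Real.log_rpow hv0]
      field_simp
    _ ≤ β * κ * (t / Real.exp 1) := by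
      gcongr
      exact Real.log_le_div_exp_one (by positivity)
    _ = β * κ / Real.exp 1 * t := by ring
  calc Real.log v ^ β ≤ (β * κ / Real.exp 1 * t) ^ β :=
        Real.rpow_le_rpow (Real.log_nonneg hv) hlog hβ.le
    _ = (β * κ / Real.exp 1) ^ β * v ^ (1 / κ) := by
        rw [Real.mul_rpow (by positivity) (by positivity), ← Real.rpow_mul hv0.le]
        congr 2
        field_simp

lemma specNorm_sub_le_of_abs_le_mul_log_rpow {d : ℕ} {M : Matrix (Fin d) (Fin d) ℝ}
    (N : Matrix (Fin d) (Fin d) ℝ) {v C β κ : ℝ} (hv : 1 ≤ v) (hC : 0 ≤ C) (hβ : 0 < β)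
    (hκ : 0 < κ) (h : ∀ i j, |M i j| ≤ C * Real.log v ^ β) :
    specNorm (M - N) ≤ specNorm N + d * C * (β * κ / Real.exp 1) ^ β * v ^ (1 / κ) := calc
  specNorm (M - N) ≤ specNorm M + specNorm N := specNorm_sub_le M N
  _ ≤ d * (C * ((β * κ / Real.exp 1) ^ β * v ^ (1 / κ))) + specNorm N := by
    gcongr
    refine specNorm_le_of_abs_le (by positivity) fun i j => (h i j).trans ?_
    gcongr
    exact Real.log_rpow_le_mul_rpow_one_div hv hβ hκ
  _ = specNorm N + d * C * (β * κ / Real.exp 1) ^ β * v ^ (1 / κ) := by ring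

section Drift

variable {Z : Type*} [MeasurableSpace Z] (P : Kernel Z Z) [IsMarkovKernel P]

instance isMarkovKernel_iterKernel (n : ℕ) : IsMarkovKernel (iterKernel P n) := by
  induction n with
  | zero => rw [iterKernel]; infer_instance
  | succ n ih => rw [iterKernel]; infer_instance

lemma lintegral_iterKernel_le_of_drift {v : Z → ℝ≥0∞} (hv : Measurable v) {l c : ℝ≥0∞}
    (hdrift : ∀ z, ∫⁻ y, v y ∂P z ≤ l * v z + c) (n : ℕ) (z : Z) :
    ∫⁻ y, v y ∂iterKernel P n z ≤ l ^ n * v z + c * ∑ i ∈ Finset.range n, l ^ i := by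
  induction n generalizing z with
  | zero => simp [iterKernel, Kernel.id_apply, lintegral_dirac' _ hv]
  | succ n ih =>
    rw [iterKernel, Kernel.lintegral_comp _ _ _ hv]
    calc ∫⁻ y, ∫⁻ w, v w ∂iterKernel P n y ∂P z
        ≤ ∫⁻ y, l ^ n * v y + c * ∑ i ∈ Finset.range n, l ^ i ∂P z := lintegral_mono (ih ·)
      _ = l ^ n * ∫⁻ y, v y ∂P z + c * ∑ i ∈ Finset.range n, l ^ i := by
        rw [lintegral_add_right _ measurable_const, lintegral_const_mul _ hv, lintegral_const,
          measure_univ, mul_one]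
      _ ≤ l ^ n * (l * v z + c) + c * ∑ i ∈ Finset.range n, l ^ i := by
        gcongr
        exact hdrift z
      _ = l ^ (n + 1) * v z + c * ∑ i ∈ Finset.range (n + 1), l ^ i := by
        rw [Finset.sum_range_succ]
        ring

lemma lintegral_iterKernel_le_mul_of_drift {v : Z → ℝ≥0∞} (hv : Measurable v) {l c : ℝ≥0∞}
    (hdrift : ∀ z, ∫⁻ y, v y ∂P z ≤ l * v z + c) (hl : l ≤ 1) (n : ℕ) {z : Z} (hz : 1 ≤ v z) :
    ∫⁻ y, v y ∂iterKernel P n z ≤ (1 + c * (1 - l)⁻¹) * v z := calc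
  _ ≤ l ^ n * v z + c * ∑ i ∈ Finset.range n, l ^ i :=
      lintegral_iterKernel_le_of_drift P hv hdrift n z
  _ ≤ 1 * v z + c * (1 - l)⁻¹ := by
      gcongr
      · exact pow_le_one₀ zero_le hl
      · rw [← ENNReal.tsum_geometric]
        exact ENNReal.sum_le_tsum _
  _ ≤ 1 * v z + c * (1 - l)⁻¹ * v z :=
      add_le_add_right (le_mul_of_one_le_right zero_le hz) _
  _ = (1 + c * (1 - l)⁻¹) * v z := by ring

lemma lintegral_ofReal_iterKernel_le_of_drift {V : Z → ℝ} (hV : Measurable V)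
    (hV1 : ∀ z, 1 ≤ V z) {lam b : ℝ} (hlam0 : 0 ≤ lam) (hlam1 : lam < 1) (hb : 0 ≤ b)
    (hdrift : ∀ z, ∫⁻ y, ENNReal.ofReal (V y) ∂P z ≤ ENNReal.ofReal (lam * V z + b))
    (n : ℕ) (z : Z) :
    ∫⁻ y, ENNReal.ofReal (V y) ∂iterKernel P n z ≤
      ENNReal.ofReal ((1 + b / (1 - lam)) * V z) := by
  have hconst : ENNReal.ofReal (1 + b / (1 - lam)) =
      1 + ENNReal.ofReal b * (1 - ENNReal.ofReal lam)⁻¹ := by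
    rw [← ENNReal.ofReal_one, ← ENNReal.ofReal_sub _ hlam0, ← ENNReal.ofReal_inv_of_pos
      (by linarith), ← ENNReal.ofReal_mul hb, ← ENNReal.ofReal_add zero_le_one (by positivity)]
    rfl
  rw [ENNReal.ofReal_mul (by positivity), hconst]
  refine lintegral_iterKernel_le_mul_of_drift P hV.ennreal_ofReal (fun y => ?_)
    (ENNReal.ofReal_le_one.2 hlam1.le) n (ENNReal.one_le_ofReal.2 (hV1 z))
  rw [← ENNReal.ofReal_mul hlam0, ← ENNReal.ofReal_add (by nlinarith [hV1 y]) hb]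
  exact hdrift y

end Drift

section Moments

variable {α : Type*} [MeasurableSpace α] (μ : Measure α) [IsProbabilityMeasure μ]

lemma lintegral_const_add_mul_rpow_le {g : α → ℝ≥0∞} (hg : AEMeasurable g μ) (a c : ℝ≥0∞)
    {q : ℝ} (hq : 1 ≤ q) :
    (∫⁻ y, (a + c * g y) ^ q ∂μ) ^ (1 / q) ≤ a + c * (∫⁻ y, g y ^ q ∂μ) ^ (1 / q) := by
  have hq0 : 0 < q := one_pos.trans_le hq
  calc (∫⁻ y, (a + c * g y) ^ q ∂μ) ^ (1 / q)
      ≤ (∫⁻ _, a ^ q ∂μ) ^ (1 / q) + (∫⁻ y, (c * g y) ^ q ∂μ) ^ (1 / q) :=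
        ENNReal.lintegral_Lp_add_le aemeasurable_const (hg.const_mul c) hq
    _ = a + c * (∫⁻ y, g y ^ q ∂μ) ^ (1 / q) := by
        simp_rw [lintegral_const, measure_univ, mul_one, ENNReal.mul_rpow_of_nonneg _ _ hq0.le]
        rw [lintegral_const_mul'' _ (hg.pow_const q),
          ENNReal.mul_rpow_of_nonneg _ _ (by positivity), ← ENNReal.rpow_mul, ← ENNReal.rpow_mul,
          mul_one_div_cancel hq0.ne', ENNReal.rpow_one, ENNReal.rpow_one]

lemma lintegral_ofReal_rpow_le_of_le_add_mul_rpow {f V : α → ℝ} (hV : Measurable V)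
    (hV0 : ∀ y, 0 ≤ V y) (hf0 : ∀ y, 0 ≤ f y) {a c q κ : ℝ} (hc : 0 ≤ c) (hq : 1 ≤ q)
    (hqκ : q ≤ κ) (hf : ∀ y, f y ≤ a + c * V y ^ (1 / κ)) :
    (∫⁻ y, ENNReal.ofReal (f y ^ q) ∂μ) ^ (1 / q) ≤
      ENNReal.ofReal a + ENNReal.ofReal c * (∫⁻ y, ENNReal.ofReal (V y) ∂μ) ^ (1 / κ) := by
  have hq0 : 0 < q := one_pos.trans_le hq
  have hκ : 0 < κ := hq0.trans_le hqκ
  set g : α → ℝ≥0∞ := fun y => ENNReal.ofReal (V y) ^ (1 / κ)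
  have hg : AEMeasurable g μ := (hV.ennreal_ofReal.pow_const _).aemeasurable
  have hfg (y : α) : ENNReal.ofReal (f y) ≤ ENNReal.ofReal a + ENNReal.ofReal c * g y := calc
    ENNReal.ofReal (f y) ≤ ENNReal.ofReal (a + c * V y ^ (1 / κ)) := ENNReal.ofReal_le_ofReal (hf y)
    _ ≤ ENNReal.ofReal a + ENNReal.ofReal c * g y := by
      rw [show g y = ENNReal.ofReal (V y ^ (1 / κ)) from
        ENNReal.ofReal_rpow_of_nonneg (hV0 y) (one_div_nonneg.2 hκ.le), ← ENNReal.ofReal_mul hc]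
      exact ENNReal.ofReal_add_le
  calc (∫⁻ y, ENNReal.ofReal (f y ^ q) ∂μ) ^ (1 / q)
      ≤ (∫⁻ y, (ENNReal.ofReal a + ENNReal.ofReal c * g y) ^ q ∂μ) ^ (1 / q) := by
        simp_rw [← ENNReal.ofReal_rpow_of_nonneg (hf0 _) hq0.le]
        gcongr with y
        exact hfg y
    _ ≤ ENNReal.ofReal a + ENNReal.ofReal c * (∫⁻ y, g y ^ q ∂μ) ^ (1 / q) :=
        lintegral_const_add_mul_rpow_le μ hg _ _ hq
    _ ≤ ENNReal.ofReal a + ENNReal.ofReal c * (∫⁻ y, g y ^ κ ∂μ) ^ (1 / κ) := by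
        gcongr
        simpa [eLpNorm'] using
          eLpNorm'_le_eLpNorm'_of_exponent_le hq0 hqκ μ hg.aestronglyMeasurable
    _ = ENNReal.ofReal a + ENNReal.ofReal c * (∫⁻ y, ENNReal.ofReal (V y) ∂μ) ^ (1 / κ) := by
        simp_rw [g, ← ENNReal.rpow_mul, one_div_mul_cancel hκ.ne', ENNReal.rpow_one]

end Moments

theorem moment_bound_matrix_function_general {Z : Type*} [MeasurableSpace Z]
    (P : Kernel Z Z) [IsMarkovKernel P]
    (V : Z → ℝ) (hVmeas : Measurable V) (hVe : ∀ z, Real.exp 1 ≤ V z)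
    (W : Z → ℝ) (hW : W = fun z => Real.log (V z))
    (lam b : ℝ) (hlam0 : 0 ≤ lam) (hlam1 : lam < 1) (hb : 0 ≤ b)
    (hdrift : ∀ z, ∫⁻ y, ENNReal.ofReal (V y) ∂(P z) ≤ ENNReal.ofReal (lam * V z + b))
    (d : ℕ) (Abar : Z → Matrix (Fin d) (Fin d) ℝ)
    (CA β : ℝ) (hCA : 0 < CA) (hβ : 0 < β)
    (hAbar_bd : ∀ z (i j : Fin d), |Abar z i j| ≤ CA * W z ^ β)
    (A : Matrix (Fin d) (Fin d) ℝ)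
    (q 𝒦 : ℝ) (hq : 1 ≤ q) (hq𝒦 : q ≤ 𝒦)
    (j : ℕ) (z : Z) :
    (∫⁻ y, ENNReal.ofReal (specNorm (Abar y - A) ^ q) ∂(iterKernel P j z)) ^ (1 / q) ≤
      ENNReal.ofReal
        ((specNorm A +
            (d : ℝ) * CA * (β * 𝒦 / Real.exp 1) ^ β * (1 + b / (1 - lam)) ^ (1 / 𝒦)) *
          V z ^ (1 / 𝒦)) := by
  subst hW
  have h𝒦 : 0 < 𝒦 := by linarith
  have hV1 (y : Z) : 1 ≤ V y := (Real.one_le_exp zero_le_one).trans (hVe y)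
  have hV0 (y : Z) : 0 ≤ V y := zero_le_one.trans (hV1 y)
  have hc : 0 ≤ (d : ℝ) * CA * (β * 𝒦 / Real.exp 1) ^ β := by positivity
  set c := (d : ℝ) * CA * (β * 𝒦 / Real.exp 1) ^ β
  set B := 1 + b / (1 - lam)
  have hB : 0 ≤ B := by have := div_nonneg hb (sub_nonneg.2 hlam1.le); linarith
  have hBV : 0 ≤ B * V z := mul_nonneg hB (hV0 z)
  calc _ ≤ ENNReal.ofReal (specNorm A) +
          ENNReal.ofReal c * (∫⁻ y, ENNReal.ofReal (V y) ∂iterKernel P j z) ^ (1 / 𝒦) :=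
        lintegral_ofReal_rpow_le_of_le_add_mul_rpow _ hVmeas hV0 (fun _ => specNorm_nonneg _) hc
          hq hq𝒦 fun y =>
            specNorm_sub_le_of_abs_le_mul_log_rpow A (hV1 y) hCA.le hβ h𝒦 (hAbar_bd y)
    _ ≤ ENNReal.ofReal (specNorm A) + ENNReal.ofReal c * ENNReal.ofReal (B * V z) ^ (1 / 𝒦) := by
        gcongr
        exact lintegral_ofReal_iterKernel_le_of_drift P hVmeas hV1 hlam0 hlam1 hb hdrift j z
    _ = ENNReal.ofReal (specNorm A + c * (B * V z) ^ (1 / 𝒦)) := by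
        rw [ENNReal.ofReal_rpow_of_nonneg hBV (one_div_nonneg.2 h𝒦.le), ← ENNReal.ofReal_mul hc,
          ← ENNReal.ofReal_add (specNorm_nonneg _) (mul_nonneg hc (Real.rpow_nonneg hBV _))]
    _ ≤ ENNReal.ofReal ((specNorm A + c * B ^ (1 / 𝒦)) * V z ^ (1 / 𝒦)) := by
        refine ENNReal.ofReal_le_ofReal ?_
        rw [Real.mul_rpow hB (hV0 z), add_mul, ← mul_assoc]
        exact add_le_add_left (le_mul_of_one_le_right (specNorm_nonneg _)
          (Real.one_le_rpow (hV1 z) (one_div_nonneg.2 h𝒦.le))) _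

/-- Under a geometric drift condition `PV ≤ λV + b`, if the entries of
`Ā` satisfy `|Ā(z)_{ij}| ≤ C_A W(z)^β` with `W = log V`, then for every `1 ≤ q ≤ 𝒦`,
every `j ∈ ℕ` and `z`,
`(∫ ‖Ā(y) − A‖^q dP^j(z,·))^{1/q}
  ≤ (‖A‖ + d C_A (β𝒦/e)^β (1 + b/(1−λ))^{1/𝒦}) V(z)^{1/𝒦}`. -/
theorem moment_bound_matrix_function {Z : Type*} [MeasurableSpace Z]
    (P : Kernel Z Z) [IsMarkovKernel P]
    (V : Z → ℝ) (hVmeas : Measurable V) (hVe : ∀ z, Real.exp 1 ≤ V z)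
    (W : Z → ℝ) (hW : W = fun z => Real.log (V z))
    (lam b : ℝ) (hlam0 : 0 ≤ lam) (hlam1 : lam < 1) (hb : 0 ≤ b)
    (hdrift : ∀ z, ∫⁻ y, ENNReal.ofReal (V y) ∂(P z) ≤ ENNReal.ofReal (lam * V z + b))
    (d : ℕ) (Abar : Z → Matrix (Fin d) (Fin d) ℝ)
    (hAbar_meas : ∀ i j, Measurable (fun z => Abar z i j))
    (CA β : ℝ) (hCA : 0 < CA) (hβ : 0 < β)
    (hAbar_bd : ∀ z (i j : Fin d), |Abar z i j| ≤ CA * W z ^ β)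
    (A : Matrix (Fin d) (Fin d) ℝ)
    (q 𝒦 : ℝ) (hq : 1 ≤ q) (hq𝒦 : q ≤ 𝒦)
    (j : ℕ) (z : Z) :
    (∫⁻ y, ENNReal.ofReal (specNorm (Abar y - A) ^ q) ∂(iterKernel P j z)) ^ (1 / q) ≤
      ENNReal.ofReal
        ((specNorm A +
            (d : ℝ) * CA * (β * 𝒦 / Real.exp 1) ^ β * (1 + b / (1 - lam)) ^ (1 / 𝒦)) *
          V z ^ (1 / 𝒦)) :=
  moment_bound_matrix_function_general P V hVmeas hVe W hW lam b hlam0 hlam1 hb hdrift d Abar CA β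
    hCA hβ hAbar_bd A q 𝒦 hq hq𝒦 j z
end
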